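/- arXiv:1610.08774 — 4 statements merged into one kernel-verified Lean document; each statement's English description precedes it below -/
import Mathlib

section
/- In a Cartesian tangent category, for any differential object A (a differential bundle over the terminal object 1), the principal projection p̂ : T(A) → A is a vertical connection on this differential bundle, and moreover it is the unique vertical connection on this bundle. -/
open CategoryTheory CategoryTheory.Limits

open scoped Classical

universe v u

variable {C : Type u} [Category.{v} C]

/-- Chosen pullback: explicit pullback data for a cospan `f : A ⟶ Z ⟵ B : g`. -/
structure ChosenPB {A B Z : C} (f : A ⟶ Z) (g : B ⟶ Z) where
  P : C
  pr0 : P ⟶ A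
  pr1 : P ⟶ B
  comm : pr0 ≫ f = pr1 ≫ g
  pair : ∀ {X : C} (u : X ⟶ A) (v : X ⟶ B), u ≫ f = v ≫ g → (X ⟶ P)
  pair_pr0 : ∀ {X : C} (u : X ⟶ A) (v : X ⟶ B) (h : u ≫ f = v ≫ g),
    pair u v h ≫ pr0 = u
  pair_pr1 : ∀ {X : C} (u : X ⟶ A) (v : X ⟶ B) (h : u ≫ f = v ≫ g),
    pair u v h ≫ pr1 = v
  hom_ext : ∀ {X : C} (w w' : X ⟶ P),
    w ≫ pr0 = w' ≫ pr0 → w ≫ pr1 = w' ≫ pr1 → w = w'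

/-- Witness that the endofunctor `T` preserves the chosen pullback `PB`. -/
structure PBLift (T : C ⥤ C) {A B Z : C} {f : A ⟶ Z} {g : B ⟶ Z} (PB : ChosenPB f g) where
  pair : ∀ {X : C} (u : X ⟶ T.obj A) (v : X ⟶ T.obj B),
    u ≫ T.map f = v ≫ T.map g → (X ⟶ T.obj PB.P)
  pair_pr0 : ∀ {X : C} (u : X ⟶ T.obj A) (v : X ⟶ T.obj B)
    (h : u ≫ T.map f = v ≫ T.map g), pair u v h ≫ T.map PB.pr0 = u
  pair_pr1 : ∀ {X : C} (u : X ⟶ T.obj A) (v : X ⟶ T.obj B)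
    (h : u ≫ T.map f = v ≫ T.map g), pair u v h ≫ T.map PB.pr1 = v
  hom_ext : ∀ {X : C} (w w' : X ⟶ T.obj PB.P),
    w ≫ T.map PB.pr0 = w' ≫ T.map PB.pr0 → w ≫ T.map PB.pr1 = w' ≫ T.map PB.pr1 → w = w'

/-- The image of a preserved chosen pullback is again a chosen pullback. -/
def PBLift.toChosenPB {T : C ⥤ C} {A B Z : C} {f : A ⟶ Z} {g : B ⟶ Z} {PB : ChosenPB f g}
    (L : PBLift T PB) : ChosenPB (T.map f) (T.map g) where
  P := T.obj PB.P
  pr0 := T.map PB.pr0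
  pr1 := T.map PB.pr1
  comm := by rw [← T.map_comp, ← T.map_comp, PB.comm]
  pair := L.pair
  pair_pr0 := L.pair_pr0
  pair_pr1 := L.pair_pr1
  hom_ext := L.hom_ext

/-- Iterated endofunctor `Tⁿ`. -/
def fpow (T : C ⥤ C) : ℕ → C ⥤ C
  | 0 => 𝟭 C
  | n + 1 => fpow T n ⋙ T

/-- A tangent category in the sense of Cockett–Cruttwell, presented with chosen
pullbacks `T₂M` of `p_M` along itself (preserved by each `Tⁿ`), addition `+`,
projection `p`, zero `0`, vertical lift `ℓ` and canonical flip `c`, together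
with the universality of the vertical lift. Sums, associativity etc. are
expressed in generalized-element form via the chosen pullback pairings. -/
structure TangentCat (C : Type u) [Category.{v} C] where
  T : C ⥤ C
  p : T ⟶ 𝟭 C
  zero : 𝟭 C ⟶ T
  l : T ⟶ T ⋙ T
  c : T ⋙ T ⟶ T ⋙ T
  T2 : ∀ M : C, ChosenPB (p.app M) (p.app M)
  T2T : ∀ M : C, PBLift T (T2 M)
  T2Tn : ∀ (M : C) (n : ℕ), PBLift (fpow T n) (T2 M)
  add : ∀ M : C, (T2 M).P ⟶ T.obj M
  add_nat : ∀ {M N : C} (f : M ⟶ N) {X : C} (u v : X ⟶ T.obj M)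
    (h : u ≫ p.app M = v ≫ p.app M)
    (h' : (u ≫ T.map f) ≫ p.app N = (v ≫ T.map f) ≫ p.app N),
    (T2 M).pair u v h ≫ add M ≫ T.map f
      = (T2 N).pair (u ≫ T.map f) (v ≫ T.map f) h' ≫ add N
  zero_p : ∀ M : C, zero.app M ≫ p.app M = 𝟙 M
  add_p : ∀ M : C, add M ≫ p.app M = (T2 M).pr0 ≫ p.app M
  add_comm' : ∀ (M : C) {X : C} (f g : X ⟶ T.obj M) (h : f ≫ p.app M = g ≫ p.app M),
    (T2 M).pair f g h ≫ add M = (T2 M).pair g f h.symm ≫ add M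
  add_assoc' : ∀ (M : C) {X : C} (f g k : X ⟶ T.obj M)
    (h1 : f ≫ p.app M = g ≫ p.app M) (h2 : g ≫ p.app M = k ≫ p.app M)
    (h3 : ((T2 M).pair f g h1 ≫ add M) ≫ p.app M = k ≫ p.app M)
    (h4 : f ≫ p.app M = ((T2 M).pair g k h2 ≫ add M) ≫ p.app M),
    (T2 M).pair ((T2 M).pair f g h1 ≫ add M) k h3 ≫ add M
      = (T2 M).pair f ((T2 M).pair g k h2 ≫ add M) h4 ≫ add M
  add_zero' : ∀ (M : C) {X : C} (f : X ⟶ T.obj M)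
    (h : f ≫ p.app M = (f ≫ p.app M ≫ zero.app M) ≫ p.app M),
    (T2 M).pair f (f ≫ p.app M ≫ zero.app M) h ≫ add M = f
  l_Tp : ∀ M : C, l.app M ≫ T.map (p.app M) = p.app M ≫ zero.app M
  l_zero : ∀ M : C, zero.app M ≫ l.app M = zero.app M ≫ T.map (zero.app M)
  l_add : ∀ (M : C) {X : C} (f g : X ⟶ T.obj M) (h : f ≫ p.app M = g ≫ p.app M),
    ∃ w : X ⟶ T.obj (T2 M).P,
      w ≫ T.map (T2 M).pr0 = f ≫ l.app M ∧ w ≫ T.map (T2 M).pr1 = g ≫ l.app M ∧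
      (T2 M).pair f g h ≫ add M ≫ l.app M = w ≫ T.map (add M)
  c_p : ∀ M : C, c.app M ≫ p.app (T.obj M) = T.map (p.app M)
  c_zero : ∀ M : C, T.map (zero.app M) ≫ c.app M = zero.app (T.obj M)
  c_add : ∀ (M : C) {X : C} (u v : X ⟶ T.obj (T.obj M))
    (h : u ≫ T.map (p.app M) = v ≫ T.map (p.app M))
    (h' : (u ≫ c.app M) ≫ p.app (T.obj M) = (v ≫ c.app M) ≫ p.app (T.obj M)),
    ∃ w : X ⟶ T.obj (T2 M).P,
      w ≫ T.map (T2 M).pr0 = u ∧ w ≫ T.map (T2 M).pr1 = v ∧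
      w ≫ T.map (add M) ≫ c.app M
        = (T2 (T.obj M)).pair (u ≫ c.app M) (v ≫ c.app M) h' ≫ add (T.obj M)
  l_c : ∀ M : C, l.app M ≫ c.app M = l.app M
  c_c : ∀ M : C, c.app M ≫ c.app M = 𝟙 (T.obj (T.obj M))
  l_l : ∀ M : C, l.app M ≫ T.map (l.app M) = l.app M ≫ l.app (T.obj M)
  c_T_c : ∀ M : C, c.app (T.obj M) ≫ T.map (c.app M) ≫ c.app (T.obj M)
    = T.map (c.app M) ≫ c.app (T.obj M) ≫ T.map (c.app M)
  l_T_c : ∀ M : C, l.app (T.obj M) ≫ T.map (c.app M) ≫ c.app (T.obj M)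
    = c.app M ≫ T.map (l.app M)
  vmu : ∀ M : C, (T2 M).P ⟶ T.obj (T.obj M)
  vmu_spec : ∀ M : C, ∃ w : (T2 M).P ⟶ T.obj (T2 M).P,
    w ≫ T.map (T2 M).pr0 = (T2 M).pr0 ≫ l.app M ∧
    w ≫ T.map (T2 M).pr1 = (T2 M).pr1 ≫ zero.app (T.obj M) ∧
    vmu M = w ≫ T.map (add M)
  vlift : ∀ {X M : C} (f : X ⟶ T.obj (T.obj M)),
    f ≫ T.map (p.app M) = f ≫ T.map (p.app M) ≫ p.app M ≫ zero.app M → (X ⟶ (T2 M).P)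
  vlift_vmu : ∀ {X M : C} (f : X ⟶ T.obj (T.obj M))
    (h : f ≫ T.map (p.app M) = f ≫ T.map (p.app M) ≫ p.app M ≫ zero.app M),
    vlift f h ≫ vmu M = f
  vmu_mono : ∀ {X M : C} (w w' : X ⟶ (T2 M).P), w ≫ vmu M = w' ≫ vmu M → w = w'

/-- Negatives: each tangent bundle is a commutative group bundle. -/
structure HasNegatives {C : Type u} [Category.{v} C] (D : TangentCat C) where
  neg : ∀ M : C, D.T.obj M ⟶ D.T.obj M
  neg_p : ∀ M : C, neg M ≫ D.p.app M = D.p.app M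
  neg_add : ∀ (M : C) {X : C} (f : X ⟶ D.T.obj M)
    (h : f ≫ D.p.app M = (f ≫ neg M) ≫ D.p.app M),
    (D.T2 M).pair f (f ≫ neg M) h ≫ D.add M = f ≫ D.p.app M ≫ D.zero.app M

/-- Fibrewise sum of two maps into a tangent bundle (defined when the maps
agree under `p`; otherwise a default value). -/
noncomputable def TangentCat.hadd (D : TangentCat C) {X M : C}
    (f g : X ⟶ D.T.obj M) : X ⟶ D.T.obj M :=
  if h : f ≫ D.p.app M = g ≫ D.p.app M then (D.T2 M).pair f g h ≫ D.add M else f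

/-- Fibrewise difference `f - g` of two maps into a tangent bundle. -/
noncomputable def TangentCat.sub (D : TangentCat C) (N : HasNegatives D) {X M : C}
    (f g : X ⟶ D.T.obj M) : X ⟶ D.T.obj M :=
  D.hadd f (g ≫ N.neg M)

/-- The bracketing operation `{f}` for the tangent bundle, obtained from the
universality (equalizer property) of the vertical lift. -/
noncomputable def TangentCat.brkT (D : TangentCat C) {X M : C}
    (f : X ⟶ D.T.obj (D.T.obj M)) : X ⟶ D.T.obj M :=
  if h : f ≫ D.T.map (D.p.app M) = f ≫ D.T.map (D.p.app M) ≫ D.p.app M ≫ D.zero.app M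
  then D.vlift f h ≫ (D.T2 M).pr0 else f ≫ D.p.app (D.T.obj M)

/-- The Lie bracket of vector fields: `[w₁,w₂] = {w₁T(w₂) − w₂T(w₁)c}`. -/
noncomputable def TangentCat.lie (D : TangentCat C) (N : HasNegatives D) {M : C}
    (w1 w2 : M ⟶ D.T.obj M) : M ⟶ D.T.obj M :=
  D.brkT (D.sub N (w1 ≫ D.T.map w2) (w2 ≫ D.T.map w1 ≫ D.c.app M))

/-- A differential bundle `𝗊 = (q, +_q, 0_q, λ)` on `E` over `M` in the tangent
category `D`, with chosen pullbacks `E₂` (of `q` along itself) and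
`T(M) ×_M E` (of `p_M` along `q`), both preserved by each `Tⁿ`, together with
the lift axioms and the universality of the lift (in equalizer form). -/
structure DiffBundle {C : Type u} [Category.{v} C] (D : TangentCat C) (E M : C) where
  q : E ⟶ M
  E2 : ChosenPB q q
  TE2 : PBLift D.T E2
  TE2n : ∀ n : ℕ, PBLift (fpow D.T n) E2
  P : ChosenPB (D.p.app M) q
  TP : PBLift D.T P
  TPn : ∀ n : ℕ, PBLift (fpow D.T n) P
  addq : E2.P ⟶ E
  zeroq : M ⟶ E
  lam : E ⟶ D.T.obj E
  addq_q : addq ≫ q = E2.pr0 ≫ q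
  zeroq_q : zeroq ≫ q = 𝟙 M
  addq_comm : ∀ {X : C} (f g : X ⟶ E) (h : f ≫ q = g ≫ q),
    E2.pair f g h ≫ addq = E2.pair g f h.symm ≫ addq
  addq_assoc : ∀ {X : C} (f g k : X ⟶ E)
    (h1 : f ≫ q = g ≫ q) (h2 : g ≫ q = k ≫ q)
    (h3 : (E2.pair f g h1 ≫ addq) ≫ q = k ≫ q)
    (h4 : f ≫ q = (E2.pair g k h2 ≫ addq) ≫ q),
    E2.pair (E2.pair f g h1 ≫ addq) k h3 ≫ addq
      = E2.pair f (E2.pair g k h2 ≫ addq) h4 ≫ addq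
  addq_zero : ∀ {X : C} (f : X ⟶ E) (h : f ≫ q = (f ≫ q ≫ zeroq) ≫ q),
    E2.pair f (f ≫ q ≫ zeroq) h ≫ addq = f
  lam_Tq : lam ≫ D.T.map q = q ≫ D.zero.app M
  lam_zero1 : zeroq ≫ lam = D.zero.app M ≫ D.T.map zeroq
  lam_add1 : ∀ {X : C} (f g : X ⟶ E) (h : f ≫ q = g ≫ q),
    ∃ w : X ⟶ D.T.obj E2.P,
      w ≫ D.T.map E2.pr0 = f ≫ lam ∧ w ≫ D.T.map E2.pr1 = g ≫ lam ∧
      E2.pair f g h ≫ addq ≫ lam = w ≫ D.T.map addq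
  lam_p : lam ≫ D.p.app E = q ≫ zeroq
  lam_zero2 : zeroq ≫ lam = zeroq ≫ D.zero.app E
  lam_add2 : ∀ {X : C} (f g : X ⟶ E) (h : f ≫ q = g ≫ q)
    (h' : (f ≫ lam) ≫ D.p.app E = (g ≫ lam) ≫ D.p.app E),
    E2.pair f g h ≫ addq ≫ lam = (D.T2 E).pair (f ≫ lam) (g ≫ lam) h' ≫ D.add E
  lam_l : lam ≫ D.l.app E = lam ≫ D.T.map lam
  mu : E2.P ⟶ D.T.obj E
  mu_spec : ∃ w : E2.P ⟶ D.T.obj E2.P,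
    w ≫ D.T.map E2.pr0 = E2.pr0 ≫ lam ∧
    w ≫ D.T.map E2.pr1 = E2.pr1 ≫ D.zero.app E ∧
    mu = w ≫ D.T.map addq
  muLift : ∀ {X : C} (f : X ⟶ D.T.obj E),
    f ≫ D.T.map q = f ≫ D.p.app E ≫ q ≫ D.zero.app M → (X ⟶ E2.P)
  muLift_mu : ∀ {X : C} (f : X ⟶ D.T.obj E)
    (h : f ≫ D.T.map q = f ≫ D.p.app E ≫ q ≫ D.zero.app M),
    muLift f h ≫ mu = f
  muLift_q : ∀ {X : C} (f : X ⟶ D.T.obj E)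
    (h : f ≫ D.T.map q = f ≫ D.p.app E ≫ q ≫ D.zero.app M),
    muLift f h ≫ E2.pr0 ≫ q = f ≫ D.p.app E ≫ q
  mu_mono : ∀ {X : C} (w w' : X ⟶ E2.P), w ≫ mu = w' ≫ mu → w = w'

/-- The bracketing operation `{f}` for a differential bundle. -/
noncomputable def DiffBundle.brk {D : TangentCat C} {E M : C} (B : DiffBundle D E M)
    {X : C} (f : X ⟶ D.T.obj E) : X ⟶ E :=
  if h : f ≫ D.T.map B.q = f ≫ D.p.app E ≫ B.q ≫ D.zero.app M
  then B.muLift f h ≫ B.E2.pr0 else f ≫ D.p.app E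

/-- Negatives for a differential bundle (the fibrewise group structure). -/
structure BundleNegatives {D : TangentCat C} {E M : C} (B : DiffBundle D E M) where
  neg : E ⟶ E
  neg_q : neg ≫ B.q = B.q
  neg_add : ∀ {X : C} (f : X ⟶ E) (h : f ≫ B.q = (f ≫ neg) ≫ B.q),
    B.E2.pair f (f ≫ neg) h ≫ B.addq = f ≫ B.q ≫ B.zeroq

/-- Fibrewise sum of maps into `E` for the bundle addition `+_q`. -/
noncomputable def DiffBundle.qadd {D : TangentCat C} {E M : C} (B : DiffBundle D E M)
    {X : C} (f g : X ⟶ E) : X ⟶ E :=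
  if h : f ≫ B.q = g ≫ B.q then B.E2.pair f g h ≫ B.addq else f

/-- Fibrewise difference of maps into `E` for the bundle addition `+_q`. -/
noncomputable def DiffBundle.qsub {D : TangentCat C} {E M : C} (B : DiffBundle D E M)
    (NB : BundleNegatives B) {X : C} (f g : X ⟶ E) : X ⟶ E :=
  B.qadd f (g ≫ NB.neg)

/-- The horizontal descent `U = ⟨T(q), p⟩ : T(E) ⟶ T(M) ×_M E`. -/
def TangentCat.hdesc (D : TangentCat C) {E M : C} (q : E ⟶ M)
    (P : ChosenPB (D.p.app M) q) : D.T.obj E ⟶ P.P :=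
  P.pair (D.T.map q) (D.p.app E) (by simpa using D.p.naturality q)

/-- A vertical connection on the differential bundle with projection `q` and
lift `lam`: a retraction `K` of `lam` with `Kq = pq`, `Kλ = ℓT(K)` and
`Kλ = T(λ)cT(K)` (equivalently, `(K,p)` and `(K,q)` are linear bundle
morphisms). -/
def IsVerticalConnection (D : TangentCat C) {E M : C} (q : E ⟶ M)
    (lam : E ⟶ D.T.obj E) (K : D.T.obj E ⟶ E) : Prop :=
  lam ≫ K = 𝟙 E ∧
  K ≫ q = D.p.app E ≫ q ∧
  K ≫ lam = D.l.app E ≫ D.T.map K ∧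
  K ≫ lam = D.T.map lam ≫ D.c.app E ≫ D.T.map K

/-- Flatness of a vertical connection: `cT(K)K = T(K)K`. -/
def IsFlat (D : TangentCat C) {E : C} (K : D.T.obj E ⟶ E) : Prop :=
  D.c.app E ≫ D.T.map K ≫ K = D.T.map K ≫ K

/-- A horizontal connection on the differential bundle with projection `q`,
lift `lam` and horizontal pullback `P = T(M) ×_M E`: a section `H` of the
horizontal descent `U = ⟨T(q),p⟩` with `Hℓ = (ℓ×0)T(H)` and
`HT(λ)c = (0×λ)T(H)` (equivalently, `(H,1)` is linear into `p_E` and into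
`T(𝗊)`). -/
def IsHorizontalConnection (D : TangentCat C) {E M : C} (q : E ⟶ M)
    (lam : E ⟶ D.T.obj E) (P : ChosenPB (D.p.app M) q)
    (H : P.P ⟶ D.T.obj E) : Prop :=
  H ≫ D.T.map q = P.pr0 ∧
  H ≫ D.p.app E = P.pr1 ∧
  (∃ w : P.P ⟶ D.T.obj P.P,
    w ≫ D.T.map P.pr0 = P.pr0 ≫ D.l.app M ∧
    w ≫ D.T.map P.pr1 = P.pr1 ≫ D.zero.app E ∧
    H ≫ D.l.app E = w ≫ D.T.map H) ∧
  (∃ w : P.P ⟶ D.T.obj P.P,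
    w ≫ D.T.map P.pr0 = P.pr0 ≫ D.zero.app (D.T.obj M) ∧
    w ≫ D.T.map P.pr1 = P.pr1 ≫ lam ∧
    H ≫ D.T.map lam ≫ D.c.app E = w ≫ D.T.map H)

/-- A (full) connection, in unbundled form: a vertical connection `K` and a
horizontal connection `H` with `HK = π₁q0_q` and `⟨K,p⟩μ + UH = 1`. -/
noncomputable def IsConnectionPair (D : TangentCat C) {E M : C} (q : E ⟶ M)
    (lam : E ⟶ D.T.obj E) (EP : ChosenPB q q) (zeroq : M ⟶ E)
    (mu : EP.P ⟶ D.T.obj E) (P : ChosenPB (D.p.app M) q)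
    (K : D.T.obj E ⟶ E) (H : P.P ⟶ D.T.obj E) : Prop :=
  IsVerticalConnection D q lam K ∧
  IsHorizontalConnection D q lam P H ∧
  H ≫ K = P.pr1 ≫ q ≫ zeroq ∧
  ∃ R : D.T.obj E ⟶ EP.P, R ≫ EP.pr0 = K ∧ R ≫ EP.pr1 = D.p.app E ∧
    D.hadd (R ≫ mu) (D.hdesc q P ≫ H) = 𝟙 (D.T.obj E)

/-- A connection on a differential bundle. -/
noncomputable def IsConnection {D : TangentCat C} {E M : C} (B : DiffBundle D E M)
    (K : D.T.obj E ⟶ E) (H : B.P.P ⟶ D.T.obj E) : Prop :=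
  IsConnectionPair D B.q B.lam B.E2 B.zeroq B.mu B.P K H

/-- A Finsler connection on a differential bundle. -/
def IsFinslerConnection {D : TangentCat C} {E M : C} (B : DiffBundle D E M)
    (R : D.T.obj E ⟶ B.E2.P) : Prop :=
  B.mu ≫ R = 𝟙 B.E2.P ∧
  R ≫ B.E2.pr1 = D.p.app E ∧
  R ≫ B.E2.pr0 ≫ B.lam = D.T.map B.lam ≫ D.c.app E ≫ D.T.map (R ≫ B.E2.pr0) ∧
  D.l.app E ≫ D.T.map (R ≫ B.E2.pr0) = R ≫ B.E2.pr0 ≫ B.lam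

/-- The covariant derivative `∇_K(w,s) = wT(s)K`. -/
def nabla (D : TangentCat C) {E M : C} (K : D.T.obj E ⟶ E)
    (w : M ⟶ D.T.obj M) (s : M ⟶ E) : M ⟶ E :=
  w ≫ D.T.map s ≫ K

/-!
Via the isomorphism `μ : A₂ ≅ T(A)` with inverse `⟨p̂, p⟩`, a tangent vector is the sum
`p̂(v)λ + p(v)0`. Transporting `ℓ` along `μ` (`⟨π₀λ, π₁0⟩T(μ) = μℓ`) gives `p̂λ = ℓT(p̂)`, and
`λ = ⟨1, q0_q⟩μ` gives `λp̂ = 1`. For any `K` with `λK = 1`, `Kq = pq` and `Kλ = ℓT(K)`,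
additivity of `λ` and `c` together with `0K = q0_q` give `μT(λ)cT(K) = π₀λ`, that is
`T(λ)cT(K) = p̂λ`. For `K = p̂` this is the last connection axiom; for a vertical connection `K` it
says `Kλ = p̂λ`, and composing with the retraction `p̂` of `λ` gives `K = p̂`.
-/

namespace TangentCat

variable (D : TangentCat C)

theorem zero_naturality {M N : C} (f : M ⟶ N) :
    f ≫ D.zero.app N = D.zero.app M ≫ D.T.map f :=
  D.zero.naturality f

theorem l_naturality {M N : C} (f : M ⟶ N) :
    D.T.map f ≫ D.l.app N = D.l.app M ≫ D.T.map (D.T.map f) :=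
  D.l.naturality f

theorem zero_c (M : C) : D.zero.app (D.T.obj M) ≫ D.c.app M = D.T.map (D.zero.app M) := by
  rw [← D.c_zero, Category.assoc, D.c_c, Category.comp_id]

theorem map_add_comp_c {M X : C} (w : X ⟶ D.T.obj (D.T2 M).P) :
    w ≫ D.T.map (D.add M) ≫ D.c.app M
      = (D.T2 (D.T.obj M)).pair (w ≫ D.T.map (D.T2 M).pr0 ≫ D.c.app M)
          (w ≫ D.T.map (D.T2 M).pr1 ≫ D.c.app M)
          (by simp only [Category.assoc, D.c_p, ← D.T.map_comp, (D.T2 M).comm])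
        ≫ D.add (D.T.obj M) := by
  have h : (w ≫ D.T.map (D.T2 M).pr0) ≫ D.T.map (D.p.app M)
      = (w ≫ D.T.map (D.T2 M).pr1) ≫ D.T.map (D.p.app M) := by
    simp only [Category.assoc, ← D.T.map_comp, (D.T2 M).comm]
  obtain ⟨w', h0, h1, he⟩ := D.c_add M _ _ h
    (by simp only [Category.assoc, D.c_p]; simpa only [Category.assoc] using h)
  obtain rfl : w = w' := (D.T2T M).hom_ext _ _ h0.symm h1.symm
  simpa only [Category.assoc] using he

end TangentCat

namespace DiffBundle

variable {D : TangentCat C} {E M : C} (B : DiffBundle D E M)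

def muPair : B.E2.P ⟶ D.T.obj B.E2.P :=
  B.TE2.pair (B.E2.pr0 ≫ B.lam) (B.E2.pr1 ≫ D.zero.app E) (by
    rw [Category.assoc, Category.assoc, B.lam_Tq, ← D.zero_naturality, ← Category.assoc,
      B.E2.comm, Category.assoc])

@[simp]
theorem muPair_pr0 : B.muPair ≫ D.T.map B.E2.pr0 = B.E2.pr0 ≫ B.lam :=
  B.TE2.pair_pr0 _ _ _

@[simp]
theorem muPair_pr1 : B.muPair ≫ D.T.map B.E2.pr1 = B.E2.pr1 ≫ D.zero.app E :=
  B.TE2.pair_pr1 _ _ _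

theorem mu_eq : B.mu = B.muPair ≫ D.T.map B.addq := by
  obtain ⟨w, h0, h1, hmu⟩ := B.mu_spec
  rw [hmu, B.TE2.hom_ext w B.muPair (by rw [h0, muPair_pr0]) (by rw [h1, muPair_pr1])]

theorem muPair_comp_map_muPair :
    B.muPair ≫ D.T.map B.muPair = B.muPair ≫ D.l.app B.E2.P := by
  apply (B.TE2n 2).hom_ext
  · change _ ≫ D.T.map (D.T.map _) = _ ≫ D.T.map (D.T.map _)
    rw [Category.assoc, ← D.T.map_comp, muPair_pr0, D.T.map_comp, ← Category.assoc, muPair_pr0,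
      Category.assoc, ← B.lam_l, Category.assoc, ← D.l_naturality, ← Category.assoc B.muPair,
      muPair_pr0, Category.assoc]
  · change _ ≫ D.T.map (D.T.map _) = _ ≫ D.T.map (D.T.map _)
    rw [Category.assoc, ← D.T.map_comp, muPair_pr1, D.T.map_comp, ← Category.assoc, muPair_pr1,
      Category.assoc, ← D.l_zero, Category.assoc, ← D.l_naturality, ← Category.assoc B.muPair,
      muPair_pr1, Category.assoc]

theorem muPair_comp_map_mu : B.muPair ≫ D.T.map B.mu = B.mu ≫ D.l.app E := by
  rw [mu_eq, D.T.map_comp, ← Category.assoc, muPair_comp_map_muPair, Category.assoc,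
    ← D.l_naturality, ← Category.assoc]

theorem pair_id_zero_comp_mu :
    B.E2.pair (𝟙 E) (B.q ≫ B.zeroq) (by simp [B.zeroq_q]) ≫ B.mu = B.lam := by
  obtain ⟨w, h0, h1, he⟩ := B.lam_add1 (𝟙 E) (B.q ≫ B.zeroq) (by simp [B.zeroq_q])
  have hunit : B.E2.pair (𝟙 E) (B.q ≫ B.zeroq) (by simp [B.zeroq_q]) ≫ B.addq = 𝟙 E := by
    simpa only [Category.id_comp] using B.addq_zero (𝟙 E) (by simp [B.zeroq_q])
  have hw : B.E2.pair (𝟙 E) (B.q ≫ B.zeroq) (by simp [B.zeroq_q]) ≫ B.muPair = w := by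
    apply B.TE2.hom_ext
    · rw [h0, Category.assoc, muPair_pr0, ← Category.assoc, B.E2.pair_pr0]
    · rw [h1, Category.assoc, muPair_pr1, ← Category.assoc, B.E2.pair_pr1, Category.assoc,
        Category.assoc, B.lam_zero2]
  rw [mu_eq, ← Category.assoc, hw, ← he, reassoc_of% hunit]

theorem pr_lam_comp_p_eq :
    (B.E2.pr0 ≫ B.lam) ≫ D.p.app E = (B.E2.pr1 ≫ B.lam) ≫ D.p.app E := by
  rw [Category.assoc, Category.assoc, B.lam_p, reassoc_of% B.E2.comm]

theorem addq_comp_lam :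
    B.addq ≫ B.lam = (D.T2 E).pair _ _ B.pr_lam_comp_p_eq ≫ D.add E := by
  have hid : B.E2.pair B.E2.pr0 B.E2.pr1 B.E2.comm = 𝟙 B.E2.P :=
    B.E2.hom_ext _ _ (by simp [B.E2.pair_pr0]) (by simp [B.E2.pair_pr1])
  simpa only [hid, Category.id_comp] using B.lam_add2 B.E2.pr0 B.E2.pr1 B.E2.comm _

theorem zero_comp_eq_of_comp_lam {K : D.T.obj E ⟶ E} (hq : K ≫ B.q = D.p.app E ≫ B.q)
    (hl : K ≫ B.lam = D.l.app E ≫ D.T.map K) : D.zero.app E ≫ K = B.q ≫ B.zeroq := by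
  have hK : (D.zero.app E ≫ K) ≫ B.lam = (D.zero.app E ≫ K) ≫ D.zero.app E := by
    rw [Category.assoc, hl, ← Category.assoc, D.l_zero, Category.assoc, ← D.T.map_comp,
      D.zero_naturality]
    rfl
  have := congrArg (· ≫ D.p.app E) hK
  simp only [Category.assoc, B.lam_p, D.zero_p, Functor.id_obj, Category.comp_id] at this
  rw [← this, reassoc_of% hq, reassoc_of% D.zero_p]

theorem mu_comp_map_lam_comp_c_comp_map {K : D.T.obj E ⟶ E} (h1 : B.lam ≫ K = 𝟙 E)
    (hq : K ≫ B.q = D.p.app E ≫ B.q) (hl : K ≫ B.lam = D.l.app E ≫ D.T.map K) :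
    B.mu ≫ D.T.map B.lam ≫ D.c.app E ≫ D.T.map K = B.E2.pr0 ≫ B.lam := by
  obtain ⟨w, hμ, hw0, hw1⟩ : ∃ w : B.E2.P ⟶ D.T.obj (D.T2 E).P,
      B.mu ≫ D.T.map B.lam = w ≫ D.T.map (D.add E) ∧
      w ≫ D.T.map (D.T2 E).pr0 = B.E2.pr0 ≫ B.lam ≫ D.T.map B.lam ∧
      w ≫ D.T.map (D.T2 E).pr1 = B.E2.pr1 ≫ B.lam ≫ D.zero.app (D.T.obj E) := by
    refine ⟨B.muPair ≫ D.T.map ((D.T2 E).pair _ _ B.pr_lam_comp_p_eq), ?_, ?_, ?_⟩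
    · rw [mu_eq, Category.assoc, ← D.T.map_comp, addq_comp_lam, D.T.map_comp, Category.assoc]
    · rw [Category.assoc, ← D.T.map_comp, (D.T2 E).pair_pr0, D.T.map_comp, ← Category.assoc,
        muPair_pr0, Category.assoc]
    · rw [Category.assoc, ← D.T.map_comp, (D.T2 E).pair_pr1, D.T.map_comp, ← Category.assoc,
        muPair_pr1, Category.assoc, ← D.zero_naturality]
  have hu : (w ≫ D.T.map (D.T2 E).pr0 ≫ D.c.app E) ≫ D.T.map K = B.E2.pr0 ≫ B.lam := by
    simp only [Category.assoc]
    rw [reassoc_of% hw0, ← reassoc_of% B.lam_l, reassoc_of% D.l_c, ← hl, reassoc_of% h1]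
  have hv : (w ≫ D.T.map (D.T2 E).pr1 ≫ D.c.app E) ≫ D.T.map K
      = (B.E2.pr0 ≫ B.lam) ≫ D.p.app E ≫ D.zero.app E := by
    simp only [Category.assoc]
    rw [reassoc_of% hw1, reassoc_of% D.zero_c, ← D.T.map_comp,
      B.zero_comp_eq_of_comp_lam hq hl, D.T.map_comp, reassoc_of% B.lam_Tq,
      ← D.zero_naturality, reassoc_of% B.lam_p, ← reassoc_of% B.E2.comm]
  -- `c` is additive and `T(K)` commutes with `+`, so both act componentwise on `w`
  calc B.mu ≫ D.T.map B.lam ≫ D.c.app E ≫ D.T.map K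
      = (w ≫ D.T.map (D.add E) ≫ D.c.app E) ≫ D.T.map K := by
        rw [reassoc_of% hμ]; simp only [Category.assoc]
    _ = _ := by
        rw [D.map_add_comp_c, Category.assoc, D.add_nat K _ _ _ (by
          rw [hu, hv]; simp only [Category.assoc, D.zero_p, Functor.id_obj, Category.comp_id])]
    _ = B.E2.pr0 ≫ B.lam := by
        simp only [hu, hv]
        exact D.add_zero' E _ _

end DiffBundle

theorem stmt0_general (D : TangentCat C) {A One : C}
    (B : DiffBundle D A One)
    (phat : D.T.obj A ⟶ A) (R : D.T.obj A ⟶ B.E2.P)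
    (hR0 : R ≫ B.E2.pr0 = phat) (hR1 : R ≫ B.E2.pr1 = D.p.app A)
    (hinv1 : R ≫ B.mu = 𝟙 (D.T.obj A)) (hinv2 : B.mu ≫ R = 𝟙 B.E2.P) :
    IsVerticalConnection D B.q B.lam phat ∧
      ∀ K : D.T.obj A ⟶ A, IsVerticalConnection D B.q B.lam K → K = phat := by
  have hmu : B.mu ≫ phat = B.E2.pr0 := by rw [← hR0, ← Category.assoc, hinv2, Category.id_comp]
  have hq : phat ≫ B.q = D.p.app A ≫ B.q := by
    rw [← hR0, ← hR1, Category.assoc, Category.assoc, B.E2.comm]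
  have h1 : B.lam ≫ phat = 𝟙 A := by
    rw [← B.pair_id_zero_comp_mu, Category.assoc, hmu, B.E2.pair_pr0]
  have hl : phat ≫ B.lam = D.l.app A ≫ D.T.map phat := by
    calc phat ≫ B.lam = R ≫ B.muPair ≫ D.T.map (B.mu ≫ phat) := by
          rw [hmu, B.muPair_pr0, ← Category.assoc, hR0]
      _ = D.l.app A ≫ D.T.map phat := by
          rw [D.T.map_comp, reassoc_of% B.muPair_comp_map_mu, reassoc_of% hinv1]
  have hflip : ∀ K : D.T.obj A ⟶ A, B.lam ≫ K = 𝟙 A → K ≫ B.q = D.p.app A ≫ B.q →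
      K ≫ B.lam = D.l.app A ≫ D.T.map K →
      D.T.map B.lam ≫ D.c.app A ≫ D.T.map K = phat ≫ B.lam := by
    intro K hK1 hKq hKl
    rw [← hR0, Category.assoc, ← B.mu_comp_map_lam_comp_c_comp_map hK1 hKq hKl,
      reassoc_of% hinv1]
  refine ⟨⟨h1, hq, hl, (hflip phat h1 hq hl).symm⟩, ?_⟩
  rintro K ⟨hK1, hKq, hKl, hKc⟩
  calc K = (K ≫ B.lam) ≫ phat := by rw [Category.assoc, h1, Category.comp_id]
    _ = phat := by rw [hKc, hflip K hK1 hKq hKl, Category.assoc, h1, Category.comp_id]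

/-- In a Cartesian tangent category, for any differential
object `A` (a differential bundle over the terminal object `1`), the principal
projection `p̂ : T(A) → A` — characterized by `⟨p̂, p⟩ : T(A) → A₂` being
inverse to the isomorphism `μ : A₂ → T(A)` — is a vertical connection on this
differential bundle, and moreover it is the unique vertical connection on it. -/
theorem stmt0 (D : TangentCat C) {A One : C}
    (hOne : IsTerminal One) (B : DiffBundle D A One)
    (phat : D.T.obj A ⟶ A) (R : D.T.obj A ⟶ B.E2.P)
    (hR0 : R ≫ B.E2.pr0 = phat) (hR1 : R ≫ B.E2.pr1 = D.p.app A)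
    (hinv1 : R ≫ B.mu = 𝟙 (D.T.obj A)) (hinv2 : B.mu ≫ R = 𝟙 B.E2.P) :
    IsVerticalConnection D B.q B.lam phat ∧
      ∀ K : D.T.obj A ⟶ A, IsVerticalConnection D B.q B.lam K → K = phat :=
  stmt0_general D B phat R hR0 hR1 hinv1 hinv2
end

section
/- If K is a vertical connection on a differential bundle 𝗊, then cT(K) : T²(E) → T(E) is a vertical connection on the differential bundle T(𝗊) = (T(q), T(+_q), T(0_q), T(λ)c). -/
open CategoryTheory CategoryTheory.Limits

open scoped Classical

universe v u

variable {C : Type u} [Category.{v} C]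

/-- If `K` is a vertical connection on a differential bundle
`𝗊`, then `cT(K)` is a vertical connection on the differential bundle
`T(𝗊) = (T(q), T(+_q), T(0_q), T(λ)c)`. -/
theorem stmt1 (D : TangentCat C) {E M : C} (B : DiffBundle D E M)
    (K : D.T.obj E ⟶ E) (hK : IsVerticalConnection D B.q B.lam K) :
    IsVerticalConnection D (D.T.map B.q) (D.T.map B.lam ≫ D.c.app E)
      (D.c.app E ≫ D.T.map K) := by
  obtain ⟨h1, h2, h3, h4⟩ := hK
  have cnat : ∀ {A B : C} (f : A ⟶ B),
      D.T.map (D.T.map f) ≫ D.c.app B = D.c.app A ≫ D.T.map (D.T.map f) :=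
    fun f => D.c.naturality f
  have cc := reassoc_of% (D.c_c E)
  have ccT := reassoc_of% (D.c_c (D.T.obj E))
  refine ⟨?_, ?_, ?_, ?_⟩
  · -- (Tλ ≫ c) ≫ (c ≫ TK) = 1
    rw [Category.assoc, cc, ← D.T.map_comp, h1, D.T.map_id]
  · -- (c ≫ TK) ≫ Tq = p ≫ Tq
    have hc : D.c.app E ≫ D.T.map (D.p.app E) ≫ D.T.map B.q
        = D.p.app (D.T.obj E) ≫ D.T.map B.q := by
      rw [← D.c_p E]
      simp only [Category.assoc]
      rw [cc]
    rw [Category.assoc, ← D.T.map_comp, h2, D.T.map_comp, hc]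
  · -- c ≫ TK ≫ Tλ ≫ c = ℓ ≫ T(c ≫ TK)
    have lTc := reassoc_of% (D.l_T_c E)
    calc (D.c.app E ≫ D.T.map K) ≫ D.T.map B.lam ≫ D.c.app E
        = D.c.app E ≫ D.T.map (K ≫ B.lam) ≫ D.c.app E := by
          simp [Category.assoc]
      _ = D.c.app E ≫ D.T.map (D.l.app E) ≫ D.T.map (D.T.map K) ≫ D.c.app E := by
          rw [h3]; simp [Category.assoc]
      _ = D.c.app E ≫ D.T.map (D.l.app E) ≫ D.c.app (D.T.obj E)
            ≫ D.T.map (D.T.map K) := by rw [cnat K]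
      _ = D.l.app (D.T.obj E) ≫ D.T.map (D.c.app E) ≫ D.c.app (D.T.obj E)
            ≫ D.c.app (D.T.obj E) ≫ D.T.map (D.T.map K) := by rw [← lTc]
      _ = D.l.app (D.T.obj E) ≫ D.T.map (D.c.app E) ≫ D.T.map (D.T.map K) := by
          rw [ccT]
      _ = D.l.app (D.T.obj E) ≫ D.T.map (D.c.app E ≫ D.T.map K) := by
          rw [D.T.map_comp]
  · -- c ≫ TK ≫ Tλ ≫ c = T(Tλ ≫ c) ≫ c ≫ T(c ≫ TK)
    have yb := reassoc_of% (D.c_T_c E)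
    calc (D.c.app E ≫ D.T.map K) ≫ D.T.map B.lam ≫ D.c.app E
        = D.c.app E ≫ D.T.map (K ≫ B.lam) ≫ D.c.app E := by
          simp [Category.assoc]
      _ = D.c.app E ≫ D.T.map (D.T.map B.lam) ≫ D.T.map (D.c.app E)
            ≫ D.T.map (D.T.map K) ≫ D.c.app E := by
          rw [h4]; simp [Category.assoc]
      _ = D.c.app E ≫ D.T.map (D.T.map B.lam) ≫ D.T.map (D.c.app E)
            ≫ D.c.app (D.T.obj E) ≫ D.T.map (D.T.map K) := by rw [cnat K]
      _ = D.T.map (D.T.map B.lam) ≫ D.c.app (D.T.obj E) ≫ D.T.map (D.c.app E)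
            ≫ D.c.app (D.T.obj E) ≫ D.T.map (D.T.map K) := by
          rw [← Category.assoc, ← Category.assoc, ← cnat B.lam]
          simp [Category.assoc]
      _ = D.T.map (D.T.map B.lam) ≫ D.T.map (D.c.app E) ≫ D.c.app (D.T.obj E)
            ≫ D.T.map (D.c.app E) ≫ D.T.map (D.T.map K) := by rw [yb]
      _ = D.T.map (D.T.map B.lam ≫ D.c.app E) ≫ D.c.app (D.T.obj E)
            ≫ D.T.map (D.c.app E ≫ D.T.map K) := by
          simp [Category.assoc]
end

section
/- Suppose K is a vertical connection on a differential bundle 𝗊 over M, and f : X → M is a map such that the pullback bundle f*(𝗊) exists. Then f*K := ⟨T(f*_E)K, T(f*(q))p⟩ : T(f*E) → f*E is a vertical connection on f*(𝗊). -/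
open CategoryTheory CategoryTheory.Limits

open scoped Classical

universe v u

variable {C : Type u} [Category.{v} C]

/-- If `K` is a vertical connection on a differential bundle
`𝗊` over `M` and `x : X ⟶ M` is such that the pullback bundle `x*(𝗊)` exists
(chosen pullback `FP` of `q` along `x`, preserved by `T`, with lift
`x*(λ) = ⟨x*_E λ, x*(q) 0⟩ = lam'`), then
`x*K = ⟨T(x*_E)K, T(x*(q))p⟩ = K'` is a vertical connection on `x*(𝗊)`. -/
theorem stmt2 (D : TangentCat C) {E M : C} (B : DiffBundle D E M)
    (K : D.T.obj E ⟶ E) (hK : IsVerticalConnection D B.q B.lam K)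
    {Xo : C} (x : Xo ⟶ M) (FP : ChosenPB x B.q) (TFP : PBLift D.T FP)
    (lam' : FP.P ⟶ D.T.obj FP.P)
    (hlam'E : lam' ≫ D.T.map FP.pr1 = FP.pr1 ≫ B.lam)
    (hlam'X : lam' ≫ D.T.map FP.pr0 = FP.pr0 ≫ D.zero.app Xo)
    (K' : D.T.obj FP.P ⟶ FP.P)
    (hK'E : K' ≫ FP.pr1 = D.T.map FP.pr1 ≫ K)
    (hK'X : K' ≫ FP.pr0 = D.T.map FP.pr0 ≫ D.p.app Xo) :
    IsVerticalConnection D FP.pr0 lam' K' := by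
  obtain ⟨h1, h2, h3, h4⟩ := hK
  have natp : ∀ {A B : C} (f : A ⟶ B), D.T.map f ≫ D.p.app B = D.p.app A ≫ f := by
    intro A B f; simpa using D.p.naturality f
  have natz : ∀ {A B : C} (f : A ⟶ B), f ≫ D.zero.app B = D.zero.app A ≫ D.T.map f := by
    intro A B f; have := D.zero.naturality f; simp only [Functor.id_obj, Functor.id_map] at this
    simpa using this
  have natl : ∀ {A B : C} (f : A ⟶ B),
      D.T.map f ≫ D.l.app B = D.l.app A ≫ D.T.map (D.T.map f) := by
    intro A B f; simpa using D.l.naturality f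
  have natc : ∀ {A B : C} (f : A ⟶ B),
      D.T.map (D.T.map f) ≫ D.c.app B = D.c.app A ≫ D.T.map (D.T.map f) := by
    intro A B f; simpa using D.c.naturality f
  refine ⟨?_, ?_, ?_, ?_⟩
  · -- lam' ≫ K' = 𝟙
    apply FP.hom_ext
    · rw [Category.assoc, hK'X, ← Category.assoc, hlam'X, Category.assoc,
        D.zero_p, Category.comp_id, Category.id_comp]
    · rw [Category.assoc, hK'E, ← Category.assoc, hlam'E, Category.assoc, h1,
        Category.comp_id, Category.id_comp]
  · -- K' ≫ pr0 = p ≫ pr0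
    rw [hK'X, natp]
  · -- K' ≫ lam' = l ≫ T K'
    apply TFP.hom_ext
    · have lhs : (K' ≫ lam') ≫ D.T.map FP.pr0
          = D.T.map FP.pr0 ≫ D.p.app Xo ≫ D.zero.app Xo := by
        rw [Category.assoc, hlam'X, ← Category.assoc, hK'X, Category.assoc]
      rw [lhs]
      calc D.T.map FP.pr0 ≫ D.p.app Xo ≫ D.zero.app Xo
          = D.T.map FP.pr0 ≫ D.l.app Xo ≫ D.T.map (D.p.app Xo) := by rw [D.l_Tp]
        _ = D.l.app FP.P ≫ D.T.map (D.T.map FP.pr0) ≫ D.T.map (D.p.app Xo) := by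
            rw [← Category.assoc, natl, Category.assoc]
        _ = D.l.app FP.P ≫ D.T.map K' ≫ D.T.map FP.pr0 := by
            rw [← D.T.map_comp, ← hK'X, D.T.map_comp]
        _ = (D.l.app FP.P ≫ D.T.map K') ≫ D.T.map FP.pr0 := by
            simp only [Category.assoc]
    · have lhs : (K' ≫ lam') ≫ D.T.map FP.pr1
          = D.T.map FP.pr1 ≫ D.l.app E ≫ D.T.map K := by
        rw [Category.assoc, hlam'E, ← Category.assoc, hK'E, Category.assoc, h3]
      rw [lhs]
      calc D.T.map FP.pr1 ≫ D.l.app E ≫ D.T.map K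
          = D.l.app FP.P ≫ D.T.map (D.T.map FP.pr1) ≫ D.T.map K := by
            rw [← Category.assoc, natl, Category.assoc]
        _ = D.l.app FP.P ≫ D.T.map K' ≫ D.T.map FP.pr1 := by
            rw [← D.T.map_comp, ← hK'E, D.T.map_comp]
        _ = (D.l.app FP.P ≫ D.T.map K') ≫ D.T.map FP.pr1 := by
            simp only [Category.assoc]
  · -- K' ≫ lam' = T lam' ≫ c ≫ T K'
    apply TFP.hom_ext
    · have lhs : (K' ≫ lam') ≫ D.T.map FP.pr0
          = D.T.map FP.pr0 ≫ D.p.app Xo ≫ D.zero.app Xo := by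
        rw [Category.assoc, hlam'X, ← Category.assoc, hK'X, Category.assoc]
      rw [lhs]
      calc D.T.map FP.pr0 ≫ D.p.app Xo ≫ D.zero.app Xo
          = D.T.map FP.pr0 ≫ D.zero.app (D.T.obj Xo) ≫ D.T.map (D.p.app Xo) := by
            have nz : D.p.app Xo ≫ D.zero.app Xo
                = D.zero.app (D.T.obj Xo) ≫ D.T.map (D.p.app Xo) := natz (D.p.app Xo)
            rw [nz]
        _ = D.T.map FP.pr0 ≫ (D.T.map (D.zero.app Xo) ≫ D.c.app Xo)
              ≫ D.T.map (D.p.app Xo) := by rw [D.c_zero]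
        _ = (D.T.map FP.pr0 ≫ D.T.map (D.zero.app Xo))
              ≫ D.c.app Xo ≫ D.T.map (D.p.app Xo) := by
            simp only [Category.assoc]
        _ = (D.T.map lam' ≫ D.T.map (D.T.map FP.pr0))
              ≫ D.c.app Xo ≫ D.T.map (D.p.app Xo) := by
            rw [← D.T.map_comp, ← hlam'X, D.T.map_comp]
        _ = D.T.map lam' ≫ D.c.app FP.P ≫ D.T.map (D.T.map FP.pr0)
              ≫ D.T.map (D.p.app Xo) := by
            rw [Category.assoc, ← Category.assoc (D.T.map (D.T.map FP.pr0)),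
              natc FP.pr0, Category.assoc]
        _ = D.T.map lam' ≫ D.c.app FP.P ≫ D.T.map K' ≫ D.T.map FP.pr0 := by
            rw [← D.T.map_comp, ← hK'X, D.T.map_comp]
        _ = (D.T.map lam' ≫ D.c.app FP.P ≫ D.T.map K') ≫ D.T.map FP.pr0 := by
            simp only [Category.assoc]
    · have lhs : (K' ≫ lam') ≫ D.T.map FP.pr1
          = D.T.map FP.pr1 ≫ D.T.map B.lam ≫ D.c.app E ≫ D.T.map K := by
        rw [Category.assoc, hlam'E, ← Category.assoc, hK'E, Category.assoc, h4]
      rw [lhs]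
      calc D.T.map FP.pr1 ≫ D.T.map B.lam ≫ D.c.app E ≫ D.T.map K
          = (D.T.map FP.pr1 ≫ D.T.map B.lam) ≫ D.c.app E ≫ D.T.map K := by
            simp only [Category.assoc]
        _ = (D.T.map lam' ≫ D.T.map (D.T.map FP.pr1)) ≫ D.c.app E ≫ D.T.map K := by
            rw [← D.T.map_comp, ← hlam'E, D.T.map_comp]
        _ = D.T.map lam' ≫ D.c.app FP.P ≫ D.T.map (D.T.map FP.pr1) ≫ D.T.map K := by
            rw [Category.assoc, ← Category.assoc (D.T.map (D.T.map FP.pr1)),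
              natc FP.pr1, Category.assoc]
        _ = D.T.map lam' ≫ D.c.app FP.P ≫ D.T.map K' ≫ D.T.map FP.pr1 := by
            rw [← D.T.map_comp, ← hK'E, D.T.map_comp]
        _ = (D.T.map lam' ≫ D.c.app FP.P ≫ D.T.map K') ≫ D.T.map FP.pr1 := by
            simp only [Category.assoc]
end

section
/- Suppose (s₁, s₀) : 𝗊′ → 𝗊 and (r₁, r₀) : 𝗊 → 𝗊′ are linear bundle morphisms between differential bundles with s₁r₁ = 1_{E′} and s₀r₀ = 1_{M′} (a section/retraction pair in the category of differential bundles and linear morphisms). If K is a vertical connection on 𝗊, then T(s₁)Kr₁ : T(E′) → E′ is a vertical connection on 𝗊′. -/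
open CategoryTheory CategoryTheory.Limits

open scoped Classical

universe v u

variable {C : Type u} [Category.{v} C]

/-- If `(s₁,s₀) : 𝗊' → 𝗊` and `(r₁,r₀) : 𝗊 → 𝗊'` are linear
bundle morphisms forming a section/retraction pair, and `K` is a vertical
connection on `𝗊`, then `T(s₁)Kr₁` is a vertical connection on `𝗊'`. -/
theorem stmt3 (D : TangentCat C) {E M E' M' : C}
    (B : DiffBundle D E M) (B' : DiffBundle D E' M')
    (s1 : E' ⟶ E) (s0 : M' ⟶ M) (r1 : E ⟶ E') (r0 : M ⟶ M')
    (hs_bundle : s1 ≫ B.q = B'.q ≫ s0)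
    (hs_lin : s1 ≫ B.lam = B'.lam ≫ D.T.map s1)
    (hr_bundle : r1 ≫ B'.q = B.q ≫ r0)
    (hr_lin : r1 ≫ B'.lam = B.lam ≫ D.T.map r1)
    (hsr1 : s1 ≫ r1 = 𝟙 E') (hsr0 : s0 ≫ r0 = 𝟙 M')
    (K : D.T.obj E ⟶ E) (hK : IsVerticalConnection D B.q B.lam K) :
    IsVerticalConnection D B'.q B'.lam (D.T.map s1 ≫ K ≫ r1) := by
  obtain ⟨hK1, hK2, hK3, hK4⟩ := hK
  refine ⟨?_, ?_, ?_, ?_⟩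
  · rw [← Category.assoc, ← hs_lin, Category.assoc, ← Category.assoc B.lam K r1,
      hK1, Category.id_comp, hsr1]
  · have hp := D.p.naturality s1
    simp only [Functor.id_map] at hp
    rw [Category.assoc, Category.assoc, hr_bundle, ← Category.assoc K B.q r0, hK2,
      Category.assoc, reassoc_of% hp, reassoc_of% hs_bundle, hsr0, Category.comp_id]
  · have hl := D.l.naturality s1
    simp only [Functor.comp_map] at hl
    rw [Category.assoc, Category.assoc, hr_lin, ← Category.assoc K, hK3]
    simp only [Category.assoc]
    rw [← Category.assoc, hl]
    simp [D.T.map_comp]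
  · have hc := D.c.naturality s1
    simp only [Functor.comp_map] at hc
    rw [Category.assoc, Category.assoc, hr_lin, ← Category.assoc K, hK4]
    simp only [Category.assoc]
    rw [← Category.assoc, ← D.T.map_comp, hs_lin, D.T.map_comp]
    simp only [Category.assoc]
    rw [reassoc_of% hc]
    simp [D.T.map_comp]
end
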